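/- arXiv:1912.13357 — 3 statements merged into one kernel-verified Lean document; each statement's English description precedes it below -/
import Mathlib

section
/- Let g, gₖ ∈ ℝⁿ with gₖ ≠ 0 and ν ∈ (0,1). If ‖g - gₖ‖ ≤ ν‖gₖ‖, then (gₖᵀg)²/‖gₖ‖² ≥ ((1-ν)²/(2(1+ν²)))‖g‖². -/
open RealInnerProductSpace

theorem inner_sq_ratio_ge (n : ℕ) (g gk : EuclideanSpace ℝ (Fin n)) (ν : ℝ)
    (hgk : gk ≠ 0) (hν : ν ∈ Set.Ioo (0 : ℝ) 1) (h : ‖g - gk‖ ≤ ν * ‖gk‖) :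
    ⟪gk, g⟫ ^ 2 / ‖gk‖ ^ 2 ≥ ((1 - ν) ^ 2 / (2 * (1 + ν ^ 2))) * ‖g‖ ^ 2 := by
  obtain ⟨hν0, hν1⟩ := hν
  have ha : (0:ℝ) < ‖gk‖ := norm_pos_iff.mpr hgk
  have hsq : ‖g - gk‖ ^ 2 ≤ ν ^ 2 * ‖gk‖ ^ 2 := by
    have := mul_self_le_mul_self (norm_nonneg _) h
    nlinarith [norm_nonneg (g - gk)]
  have hexp : ‖g - gk‖ ^ 2 = ‖g‖ ^ 2 - 2 * ⟪gk, g⟫ + ‖gk‖ ^ 2 := by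
    have h1 := norm_sub_sq_real g gk
    have h2 := real_inner_comm g gk
    linarith
  set a := ‖gk‖
  set b := ‖g‖
  set t := ⟪gk, g⟫ with ht
  have key : 2 * t ≥ b ^ 2 + (1 - ν ^ 2) * a ^ 2 := by nlinarith
  have hb : (0:ℝ) ≤ b := norm_nonneg _
  have hν2 : 0 < 1 - ν ^ 2 := by nlinarith
  have ht0 : 0 < t := by nlinarith [mul_pos hν2 (mul_pos ha ha)]
  rw [ge_iff_le, le_div_iff₀ (by positivity : (0:ℝ) < a ^ 2)]
  have hmain : t ^ 2 ≥ (1 - ν ^ 2) * b ^ 2 * a ^ 2 := by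
    have hS : 0 ≤ b ^ 2 + (1 - ν ^ 2) * a ^ 2 := by positivity
    have h4 := mul_self_le_mul_self hS key
    nlinarith [sq_nonneg (b ^ 2 - (1 - ν ^ 2) * a ^ 2)]
  have hc : (1 - ν) ^ 2 / (2 * (1 + ν ^ 2)) ≤ 1 - ν ^ 2 := by
    rw [div_le_iff₀ (by positivity)]
    nlinarith
  nlinarith [mul_le_mul_of_nonneg_right hc (mul_nonneg (sq_nonneg b) (sq_nonneg a))]
end

section
/- Let F : ℝⁿ → ℝ satisfy mI ⪯ ∇²F(x) ⪯ MI for all x with 0 < m ≤ M, with minimizer x*, and suppose ‖∇F(xₖ)‖ ≤ γ. If at iteration k the inequalities (gₖᵀ∇F(xₖ))²/‖gₖ‖² ≥ (1-ν²)‖∇F(xₖ)‖² and F(x_{k+1}) ≤ F(xₖ) - ((1-ε)/(2M(1+γ/√m)))·(gₖᵀ∇F(xₖ))²/‖gₖ‖² hold, then F(x_{k+1}) - F(x*) ≤ ρ(F(xₖ) - F(x*)) with ρ = 1 - m(1-ν²)(1-ε)/(M(1+γ/√m)), and 0 < ρ < 1 when ν, ε ∈ (0,1). -/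
open RealInnerProductSpace

theorem linear_decrease_step (n : ℕ) (F : EuclideanSpace ℝ (Fin n) → ℝ)
    (gradF : EuclideanSpace ℝ (Fin n) → EuclideanSpace ℝ (Fin n))
    (m M γ ν ε : ℝ) (hm : 0 < m) (hmM : m ≤ M)
    (hν : ν ∈ Set.Ioo (0 : ℝ) 1) (hε : ε ∈ Set.Ioo (0 : ℝ) 1) (hγ : 0 < γ)
    (hgrad : ∀ x, HasGradientAt F (gradF x) x)
    (hlb : ∀ x y, F y ≥ F x + ⟪gradF x, y - x⟫ + m / 2 * ‖y - x‖ ^ 2)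
    (hub : ∀ x y, F y ≤ F x + ⟪gradF x, y - x⟫ + M / 2 * ‖y - x‖ ^ 2)
    (xstar : EuclideanSpace ℝ (Fin n)) (hmin : ∀ y, F xstar ≤ F y)
    (xk xk1 gk : EuclideanSpace ℝ (Fin n)) (hgk : gk ≠ 0)
    (hgbound : ‖gradF xk‖ ≤ γ)
    (hangle : ⟪gk, gradF xk⟫ ^ 2 / ‖gk‖ ^ 2 ≥ (1 - ν ^ 2) * ‖gradF xk‖ ^ 2)
    (hdec : F xk1 ≤ F xk -
      ((1 - ε) / (2 * M * (1 + γ / Real.sqrt m))) * (⟪gk, gradF xk⟫ ^ 2 / ‖gk‖ ^ 2)) :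
    F xk1 - F xstar ≤
        (1 - m * (1 - ν ^ 2) * (1 - ε) / (M * (1 + γ / Real.sqrt m))) * (F xk - F xstar) ∧
      0 < 1 - m * (1 - ν ^ 2) * (1 - ε) / (M * (1 + γ / Real.sqrt m)) ∧
      1 - m * (1 - ν ^ 2) * (1 - ε) / (M * (1 + γ / Real.sqrt m)) < 1 := by
  obtain ⟨hν0, hν1⟩ := hν
  obtain ⟨hε0, hε1⟩ := hε
  have hM : 0 < M := lt_of_lt_of_le hm hmM
  have hsm : 0 < Real.sqrt m := Real.sqrt_pos.mpr hm
  have hq : 0 < γ / Real.sqrt m := div_pos hγ hsm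
  have hD : 0 < M * (1 + γ / Real.sqrt m) := by positivity
  set Δ : ℝ := F xk - F xstar with hΔdef
  have hΔ : 0 ≤ Δ := by have := hmin xk; simp [hΔdef]; linarith
  -- PL inequality: ‖gradF xk‖^2 ≥ 2 m Δ
  have hPL : 2 * m * Δ ≤ ‖gradF xk‖ ^ 2 := by
    have h1 := hlb xk xstar
    have h2 : ⟪gradF xk, xstar - xk⟫ ≥ -(‖gradF xk‖ * ‖xstar - xk‖) := by
      have := abs_real_inner_le_norm (gradF xk) (xstar - xk)
      have := neg_abs_le ⟪gradF xk, xstar - xk⟫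
      linarith
    nlinarith [sq_nonneg (‖gradF xk‖ - m * ‖xstar - xk‖), norm_nonneg (xstar - xk),
      norm_nonneg (gradF xk)]
  set Q : ℝ := ⟪gk, gradF xk⟫ ^ 2 / ‖gk‖ ^ 2 with hQdef
  have hQ : (1 - ν ^ 2) * (2 * m * Δ) ≤ Q := by
    have h1 : (1 - ν ^ 2) * (2 * m * Δ) ≤ (1 - ν ^ 2) * ‖gradF xk‖ ^ 2 := by
      apply mul_le_mul_of_nonneg_left hPL; nlinarith
    linarith [hangle]
  have hc : 0 ≤ (1 - ε) / (2 * M * (1 + γ / Real.sqrt m)) := by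
    apply div_nonneg (by linarith) (by positivity)
  have key : F xk1 - F xstar ≤ Δ - ((1 - ε) / (2 * M * (1 + γ / Real.sqrt m))) *
      ((1 - ν ^ 2) * (2 * m * Δ)) := by
    have := mul_le_mul_of_nonneg_left hQ hc
    simp only [hΔdef] at *
    linarith
  have hexp : ((1 - ε) / (2 * M * (1 + γ / Real.sqrt m))) * ((1 - ν ^ 2) * (2 * m * Δ))
      = (m * (1 - ν ^ 2) * (1 - ε) / (M * (1 + γ / Real.sqrt m))) * Δ := by
    field_simp
  refine ⟨?_, ?_, ?_⟩
  · rw [sub_mul, one_mul, ← hexp]; exact key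
  · have hA : (0:ℝ) < 1 - ν ^ 2 := by
      have := pow_lt_one₀ hν0.le hν1 (n := 2) (by norm_num)
      linarith
    have hB : (0:ℝ) < 1 - ε := by linarith
    have h2 : (1 - ν ^ 2) * (1 - ε) < 1 := by nlinarith
    have h1 : m * (1 - ν ^ 2) * (1 - ε) < M * (1 + γ / Real.sqrt m) := by
      calc m * (1 - ν ^ 2) * (1 - ε) = m * ((1 - ν ^ 2) * (1 - ε)) := by ring
        _ < m * 1 := mul_lt_mul_of_pos_left h2 hm
        _ = m := mul_one m
        _ ≤ M := hmM
        _ = M * 1 := (mul_one M).symm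
        _ < M * (1 + γ / Real.sqrt m) := mul_lt_mul_of_pos_left (by linarith) hM
    have := (div_lt_one hD).mpr h1
    linarith
  · have hA : (0:ℝ) < 1 - ν ^ 2 := by
      have := pow_lt_one₀ hν0.le hν1 (n := 2) (by norm_num)
      linarith
    have hB : (0:ℝ) < 1 - ε := by linarith
    have h1 : 0 < m * (1 - ν ^ 2) * (1 - ε) / (M * (1 + γ / Real.sqrt m)) :=
      div_pos (mul_pos (mul_pos hm hA) hB) hD
    linarith
end

section
/- Let F : ℝⁿ → ℝ be standard self-concordant, x ∈ ℝⁿ, d = -∇F_S(x) for some sampled gradient, ρ = dᵀ(-∇F(x)) ≥ 0, δ = √(dᵀ∇²F(x)d) > 0. Then for all 0 ≤ t < 1/δ: F(x + t·d) ≤ F(x) - [(δ + ρ)t + log(1 - δt)]. -/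
/-! Restrict `F` to the line, `f s = F (x + s • d)`. Self-concordance says
`|(f'')'| ≤ 2 (f'')^{3/2}`, i.e. `(f'')^{-1/2}` is `1`-Lipschitz wherever `f'' > 0`. Starting from
`(f'' 0)^{-1/2} = δ⁻¹`, this keeps `f''` positive on `[0, ∞)` and gives `f'' s ≤ δ² / (1 - δ s)²`
for `0 ≤ s < 1/δ`. Integrating twice from `0` yields `f t ≤ f 0 + f' 0 t + ω_*(δ t)` with
`ω_*(u) = -u - log (1 - u)`, which is the claim since `f' 0 = -ρ`. -/

open Real Set

lemma rpow_three_halves {a : ℝ} (ha : 0 ≤ a) : a ^ (3 / 2 : ℝ) = a * √a := by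
  rw [show (3 / 2 : ℝ) = 1 + 1 / 2 by norm_num, rpow_add' ha (by norm_num), rpow_one,
    sqrt_eq_rpow]

lemma hasDerivAt_inv_sqrt {A : ℝ → ℝ} {A' s : ℝ} (hA : HasDerivAt A A' s) (hpos : 0 < A s) :
    HasDerivAt (fun u => (√(A u))⁻¹) (-A' / (2 * (A s * √(A s)))) s := by
  have hsqrt : 0 < √(A s) := sqrt_pos.mpr hpos
  refine ((hA.sqrt hpos.ne').inv hsqrt.ne').congr_deriv ?_
  rw [sq_sqrt hpos.le]
  field_simp

lemma abs_inv_sqrt_sub_le {A : ℝ → ℝ} {S : Set ℝ} (hS : Convex ℝ S)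
    (hA : ∀ s ∈ S, DifferentiableAt ℝ A s) (hpos : ∀ s ∈ S, 0 < A s)
    (hsc : ∀ s ∈ S, |deriv A s| ≤ 2 * A s ^ (3 / 2 : ℝ)) {x y : ℝ} (hx : x ∈ S) (hy : y ∈ S) :
    |(√(A y))⁻¹ - (√(A x))⁻¹| ≤ |y - x| := by
  have hderiv (s) (hs : s ∈ S) := hasDerivAt_inv_sqrt (hA s hs).hasDerivAt (hpos s hs)
  have hbound (s) (hs : s ∈ S) : ‖-deriv A s / (2 * (A s * √(A s)))‖ ≤ 1 := by
    have h := hsc s hs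
    rw [rpow_three_halves (hpos s hs).le] at h
    have : 0 < 2 * (A s * √(A s)) := by have := hpos s hs; positivity
    rwa [Real.norm_eq_abs, abs_div, abs_neg, abs_of_pos this, div_le_one this]
  simpa using hS.norm_image_sub_le_of_norm_hasDerivWithin_le
    (fun s hs => (hderiv s hs).hasDerivWithinAt) hbound hx hy

/-- Look at the first zero of `A` on `[0, ∞)`. -/
lemma Continuous.pos_of_bounded_away_on_Ico {A : ℝ → ℝ} (hA : Continuous A) (h0 : 0 < A 0)
    (hbdd : ∀ T > 0, (∀ s ∈ Ico 0 T, 0 < A s) → ∃ c > 0, ∀ s ∈ Ico 0 T, c ≤ A s)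
    {s : ℝ} (hs : 0 ≤ s) : 0 < A s := by
  by_contra! hs₀
  set Z := Ici 0 ∩ {u | A u ≤ 0}
  have hZbdd : BddBelow Z := ⟨0, fun _ hu => hu.1⟩
  have hTZ : sInf Z ∈ Z :=
    (isClosed_Ici.inter (isClosed_le hA continuous_const)).csInf_mem ⟨s, hs, hs₀⟩ hZbdd
  set T := sInf Z
  have hT : 0 < T := hTZ.1.lt_of_ne fun h => (show A 0 ≤ 0 from h ▸ hTZ.2).not_gt h0
  have hposT : ∀ u ∈ Ico 0 T, 0 < A u := fun u hu => by
    by_contra! h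
    exact (csInf_le hZbdd ⟨hu.1, h⟩).not_gt hu.2
  obtain ⟨c, hc, hcA⟩ := hbdd T hT hposT
  have : c ≤ A T := le_on_closure hcA continuousOn_const hA.continuousOn
    (by rw [closure_Ico hT.ne]; exact right_mem_Icc.mpr hT.le)
  exact (hTZ.2 : A T ≤ 0).not_gt (hc.trans_le this)

lemma pos_of_abs_deriv_le_rpow {A : ℝ → ℝ} (hA : Differentiable ℝ A)
    (hsc : ∀ s, |deriv A s| ≤ 2 * A s ^ (3 / 2 : ℝ)) (h0 : 0 < A 0) {s : ℝ} (hs : 0 ≤ s) :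
    0 < A s := by
  refine hA.continuous.pos_of_bounded_away_on_Ico h0 (fun T hT hpos => ?_) hs
  refine ⟨((√(A 0))⁻¹ + T)⁻¹ ^ 2, by positivity, fun u hu => ?_⟩
  have hLip := abs_inv_sqrt_sub_le (convex_Ico 0 T) (fun v _ => hA v) hpos (fun v _ => hsc v)
    (left_mem_Ico.mpr hT) hu
  have hu₀ : 0 < √(A u) := sqrt_pos.mpr (hpos u hu)
  have : (√(A u))⁻¹ ≤ (√(A 0))⁻¹ + T := by
    rw [sub_zero, abs_of_nonneg hu.1] at hLip
    linarith [le_of_abs_le hLip, hu.2]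
  rw [← le_sqrt (by positivity) (hpos u hu).le, inv_le_comm₀ (by positivity) hu₀]
  exact this

lemma le_div_sq_of_abs_deriv_le_rpow {A : ℝ → ℝ} (hA : Differentiable ℝ A)
    (hsc : ∀ s, |deriv A s| ≤ 2 * A s ^ (3 / 2 : ℝ)) (h0 : 0 < A 0) {s : ℝ} (hs : 0 ≤ s)
    (hs₁ : √(A 0) * s < 1) : A s ≤ A 0 / (1 - √(A 0) * s) ^ 2 := by
  have hpos (u) (hu : u ∈ Icc 0 s) : 0 < A u := pos_of_abs_deriv_le_rpow hA hsc h0 hu.1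
  have hLip := abs_inv_sqrt_sub_le (convex_Icc 0 s) (fun v _ => hA v) hpos (fun v _ => hsc v)
    (left_mem_Icc.mpr hs) (right_mem_Icc.mpr hs)
  rw [sub_zero, abs_of_nonneg hs] at hLip
  have hδ : 0 < √(A 0) := sqrt_pos.mpr h0
  have hs₀ : 0 < √(A s) := sqrt_pos.mpr (hpos s (right_mem_Icc.mpr hs))
  have h1 : 0 < 1 - √(A 0) * s := by linarith
  have hinv : (√(A 0))⁻¹ - s ≤ (√(A s))⁻¹ := by linarith [neg_abs_le ((√(A s))⁻¹ - (√(A 0))⁻¹)]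
  have hsqrt : √(A s) ≤ √(A 0) / (1 - √(A 0) * s) := by
    calc √(A s) = ((√(A s))⁻¹)⁻¹ := (inv_inv _).symm
      _ ≤ ((√(A 0))⁻¹ - s)⁻¹ := inv_anti₀ (by field_simp; linarith) hinv
      _ = √(A 0) / (1 - √(A 0) * s) := by field_simp
  calc A s = √(A s) ^ 2 := (sq_sqrt (hpos s (right_mem_Icc.mpr hs)).le).symm
    _ ≤ (√(A 0) / (1 - √(A 0) * s)) ^ 2 := pow_le_pow_left₀ hs₀.le hsqrt 2
    _ = A 0 / (1 - √(A 0) * s) ^ 2 := by rw [div_pow, sq_sqrt h0.le]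

lemma image_le_of_second_deriv_le {f f' f'' g g' g'' : ℝ → ℝ} {a b : ℝ}
    (hf : ∀ x ∈ Icc a b, HasDerivAt f (f' x) x) (hf' : ∀ x ∈ Icc a b, HasDerivAt f' (f'' x) x)
    (hg : ∀ x ∈ Icc a b, HasDerivAt g (g' x) x) (hg' : ∀ x ∈ Icc a b, HasDerivAt g' (g'' x) x)
    (ha : f a ≤ g a) (ha' : f' a ≤ g' a) (hle : ∀ x ∈ Ico a b, f'' x ≤ g'' x) :
    ∀ x ∈ Icc a b, f x ≤ g x := by
  have hcont {φ φ' : ℝ → ℝ} (h : ∀ x ∈ Icc a b, HasDerivAt φ (φ' x) x) : ContinuousOn φ (Icc a b) :=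
    fun x hx => (h x hx).continuousAt.continuousWithinAt
  have hright {φ φ' : ℝ → ℝ} (h : ∀ x ∈ Icc a b, HasDerivAt φ (φ' x) x) (x) (hx : x ∈ Ico a b) :
      HasDerivWithinAt φ (φ' x) (Ici x) x := (h x (Ico_subset_Icc_self hx)).hasDerivWithinAt
  have hderiv : ∀ x ∈ Icc a b, f' x ≤ g' x :=
    image_le_of_deriv_right_le_deriv_boundary (hcont hf') (hright hf') ha' (hcont hg') (hright hg')
      hle
  exact image_le_of_deriv_right_le_deriv_boundary (hcont hf) (hright hf) ha (hcont hg) (hright hg)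
    fun x hx => hderiv x (Ico_subset_Icc_self hx)

noncomputable def omegaStar (u : ℝ) : ℝ := -u - log (1 - u)

@[simp] lemma omegaStar_zero : omegaStar 0 = 0 := by simp [omegaStar]

lemma hasDerivAt_omegaStar {u : ℝ} (hu : u < 1) : HasDerivAt omegaStar (u / (1 - u)) u := by
  have h := ((hasDerivAt_id u).neg.sub (((hasDerivAt_id u).const_sub 1).log (by simp; linarith)))
  refine h.congr_deriv ?_
  have : 1 - u ≠ 0 := by linarith
  simp only [id]
  field_simp
  ring

lemma hasDerivAt_div_one_sub {u : ℝ} (hu : u < 1) :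
    HasDerivAt (fun v => v / (1 - v)) (1 / (1 - u) ^ 2) u := by
  refine ((hasDerivAt_id u).div ((hasDerivAt_id u).const_sub 1) (by simp; linarith)).congr_deriv ?_
  have : 1 - u ≠ 0 := by linarith
  simp only [id]
  field_simp
  ring

theorem le_add_omegaStar_of_abs_iteratedDeriv_three_le {f : ℝ → ℝ} (hf : ContDiff ℝ 3 f)
    (hsc : ∀ s, |iteratedDeriv 3 f s| ≤ 2 * iteratedDeriv 2 f s ^ (3 / 2 : ℝ))
    (h0 : 0 < iteratedDeriv 2 f 0) {t : ℝ} (ht : 0 ≤ t)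
    (ht₁ : √(iteratedDeriv 2 f 0) * t < 1) :
    f t ≤ f 0 + deriv f 0 * t + omegaStar (√(iteratedDeriv 2 f 0) * t) := by
  have hf' : ContDiff ℝ 2 (deriv f) := hf.deriv'
  have hf'' : ContDiff ℝ 1 (deriv (deriv f)) := hf'.deriv'
  simp only [iteratedDeriv_eq_iterate, Function.iterate_succ_apply', Function.iterate_zero_apply]
    at hsc h0 ht₁ ⊢
  set A := deriv (deriv f)
  set δ := √(A 0)
  have hδs (s) (hs : s ∈ Icc 0 t) : δ * s < 1 := by
    nlinarith [sqrt_nonneg (A 0), hs.2]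
  refine image_le_of_second_deriv_le (f' := deriv f) (f'' := A)
    (g := fun s => f 0 + deriv f 0 * s + omegaStar (δ * s))
    (g' := fun s => deriv f 0 + δ * (δ * s / (1 - δ * s)))
    (g'' := fun s => δ * (δ * (1 / (1 - δ * s) ^ 2)))
    (fun s _ => (hf.differentiable (by norm_num) s).hasDerivAt)
    (fun s _ => (hf'.differentiable (by norm_num) s).hasDerivAt)
    (fun s hs => ?_) (fun s hs => ?_) (by simp) (by simp) (fun s hs => ?_) t ⟨ht, le_rfl⟩
  · have hω := (hasDerivAt_omegaStar (hδs s hs)).comp s ((hasDerivAt_id s).const_mul δ)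
    exact ((((hasDerivAt_id s).const_mul (deriv f 0)).const_add (f 0)).add hω).congr_deriv
      (by ring)
  · have hω' := (hasDerivAt_div_one_sub (hδs s hs)).comp s ((hasDerivAt_id s).const_mul δ)
    exact ((hω'.const_mul δ).const_add (deriv f 0)).congr_deriv (by ring)
  · have hA := le_div_sq_of_abs_deriv_le_rpow (hf''.differentiable one_ne_zero) hsc h0 hs.1
      (hδs s (Ico_subset_Icc_self hs))
    exact hA.trans_eq (by nth_rw 1 [← mul_self_sqrt h0.le]; ring)

theorem self_concordant_decrease_general (n : ℕ) (F : EuclideanSpace ℝ (Fin n) → ℝ)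
    (hF : ContDiff ℝ 3 F)
    (hsc : ∀ (x h : EuclideanSpace ℝ (Fin n)) (t : ℝ),
      |iteratedDeriv 3 (fun s : ℝ => F (x + s • h)) t| ≤
        2 * (iteratedDeriv 2 (fun s : ℝ => F (x + s • h)) t) ^ ((3 : ℝ) / 2))
    (x d : EuclideanSpace ℝ (Fin n)) (ρ δ : ℝ)
    (hρdef : ρ = -(deriv (fun s : ℝ => F (x + s • d)) 0))
    (hδdef : δ = Real.sqrt (iteratedDeriv 2 (fun s : ℝ => F (x + s • d)) 0)) (hδ : 0 < δ) :
    ∀ t : ℝ, 0 ≤ t → t < 1 / δ →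
      F (x + t • d) ≤ F x - ((δ + ρ) * t + Real.log (1 - δ * t)) := by
  intro t ht htδ
  have hline : ContDiff ℝ 3 (fun s : ℝ => F (x + s • d)) := by fun_prop
  have h0 : 0 < iteratedDeriv 2 (fun s : ℝ => F (x + s • d)) 0 := sqrt_pos.mp (hδdef ▸ hδ)
  have ht₁ : δ * t < 1 := by rwa [lt_div_iff₀ hδ, mul_comm] at htδ
  have hbound :=
    le_add_omegaStar_of_abs_iteratedDeriv_three_le hline (hsc x d) h0 ht (hδdef ▸ ht₁)
  rw [← hδdef, ← neg_neg (deriv _ 0), ← hρdef] at hbound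
  simp only [zero_smul, add_zero, omegaStar] at hbound
  linarith

theorem self_concordant_decrease (n : ℕ) (F : EuclideanSpace ℝ (Fin n) → ℝ)
    (hF : ContDiff ℝ 3 F)
    (hsc : ∀ (x h : EuclideanSpace ℝ (Fin n)) (t : ℝ),
      |iteratedDeriv 3 (fun s : ℝ => F (x + s • h)) t| ≤
        2 * (iteratedDeriv 2 (fun s : ℝ => F (x + s • h)) t) ^ ((3 : ℝ) / 2))
    (x d : EuclideanSpace ℝ (Fin n)) (ρ δ : ℝ)
    (hρdef : ρ = -(deriv (fun s : ℝ => F (x + s • d)) 0)) (hρ : 0 ≤ ρ)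
    (hδdef : δ = Real.sqrt (iteratedDeriv 2 (fun s : ℝ => F (x + s • d)) 0)) (hδ : 0 < δ) :
    ∀ t : ℝ, 0 ≤ t → t < 1 / δ →
      F (x + t • d) ≤ F x - ((δ + ρ) * t + Real.log (1 - δ * t)) :=
  self_concordant_decrease_general n F hF hsc x d ρ δ hρdef hδdef hδ
end
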